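/- Let A = (a_x)_{x∈X} be a finite-outcome measurement on a compact convex state space S, and suppose A is an extreme point of the convex set of all measurements with outcome set X. Then the joint measurement of A with any measurement B, when it exists, is unique. In particular, A is intersubjective: the unique joint measurement of A with itself is determined, hence every joint measurement C = (c_{x,x'}) of A with itself satisfies ∑_x c_{x,x} = 1_S if the canonical joint measurement does (and the diagonal is uniquely determined). -/

import Mathlib

open Finset

/-- An effect on the state space `S`: an affine map taking values in `[0,1]` on `S`. -/
def IsEffect {V : Type*} [AddCommGroup V] [Module ℝ V] (S : Set V) (a : V →ᵃ[ℝ] ℝ) : Prop :=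
  ∀ s ∈ S, 0 ≤ a s ∧ a s ≤ 1

/-- A finite-outcome measurement: a family of effects summing to the unit effect on `S`. -/
def IsMeasurement {V : Type*} [AddCommGroup V] [Module ℝ V] (S : Set V) {X : Type*} [Fintype X]
    (A : X → (V →ᵃ[ℝ] ℝ)) : Prop :=
  (∀ x, IsEffect S (A x)) ∧ ∀ s ∈ S, ∑ x, A x s = 1

/-- A joint measurement of `A` and `B`: a measurement on `X × Y` whose marginals are `A`, `B`. -/
def IsJointMeasurement {V : Type*} [AddCommGroup V] [Module ℝ V] (S : Set V)
    {X Y : Type*} [Fintype X] [Fintype Y]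
    (A : X → (V →ᵃ[ℝ] ℝ)) (B : Y → (V →ᵃ[ℝ] ℝ)) (C : X × Y → (V →ᵃ[ℝ] ℝ)) : Prop :=
  IsMeasurement S C ∧ (∀ x, ∀ s ∈ S, ∑ y, C (x, y) s = A x s) ∧
    (∀ y, ∀ s ∈ S, ∑ x, C (x, y) s = B y s)

/-- `A` is `α`-intersubjective: every joint measurement of `A` with itself has diagonal
weight at least `α · 1_S`. -/
def Intersubjective {V : Type*} [AddCommGroup V] [Module ℝ V] (S : Set V) {X : Type*} [Fintype X]
    (α : ℝ) (A : X → (V →ᵃ[ℝ] ℝ)) : Prop :=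
  ∀ C : X × X → (V →ᵃ[ℝ] ℝ), IsJointMeasurement S A A C → ∀ s ∈ S, α ≤ ∑ x, C (x, x) s

/-- `A` is `α`-sharp: for distinct outcomes `x ≠ x'`, any effect below both `A x` and `A x'`
is below `(1 - α) · 1_S`. -/
def SharpMeasurement {V : Type*} [AddCommGroup V] [Module ℝ V] (S : Set V) {X : Type*} [Fintype X]
    (α : ℝ) (A : X → (V →ᵃ[ℝ] ℝ)) : Prop :=
  ∀ x x', x ≠ x' → ∀ b : V →ᵃ[ℝ] ℝ, IsEffect S b → (∀ s ∈ S, b s ≤ A x s) →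
    (∀ s ∈ S, b s ≤ A x' s) → ∀ s ∈ S, b s ≤ 1 - α

/-! Subtracting `C₂(·, y₀)` from `A` and adding `C₁(·, y₀)` trades the `y₀`-column of `C₂` for
that of `C₁`, which keeps the effects nonnegative and, because both columns sum to `B y₀`, keeps
the total equal to `1_S`. So with `E x = C₁(x, y₀) - C₂(x, y₀)` both `A + E` and `A - E` are
measurements, and extremality of their midpoint `A` forces `E = 0`. -/

theorem Set.eq_zero_of_add_mem_of_sub_mem_of_mem_extremePoints {𝕜 E : Type*} [Ring 𝕜]
    [LinearOrder 𝕜] [IsStrictOrderedRing 𝕜] [Invertible (2 : 𝕜)] [AddCommGroup E] [Module 𝕜 E]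
    {K : Set E} {x e : E} (hx : x ∈ K.extremePoints 𝕜) (hadd : x + e ∈ K) (hsub : x - e ∈ K) :
    e = 0 :=
  add_eq_left.mp (hx.2 hadd hsub (mem_openSegment_add_sub x e))

section Measurement

variable {V : Type*} [AddCommGroup V] [Module ℝ V] {S : Set V} {X Y : Type*} [Fintype X]
  [Fintype Y] {A : X → (V →ᵃ[ℝ] ℝ)} {B : Y → (V →ᵃ[ℝ] ℝ)} {C C₁ C₂ : X × Y → (V →ᵃ[ℝ] ℝ)}

theorem isMeasurement_of_nonneg_of_sum_eq_one (hnonneg : ∀ x, ∀ s ∈ S, 0 ≤ A x s)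
    (hsum : ∀ s ∈ S, ∑ x, A x s = 1) : IsMeasurement S A := by
  refine ⟨fun x s hs => ⟨hnonneg x s hs, ?_⟩, hsum⟩
  rw [← hsum s hs]
  exact single_le_sum (fun x _ => hnonneg x s hs) (mem_univ x)

theorem IsJointMeasurement.apply_le_left (hC : IsJointMeasurement S A B C) (x : X) (y : Y)
    {s : V} (hs : s ∈ S) : C (x, y) s ≤ A x s := by
  rw [← hC.2.1 x s hs]
  exact single_le_sum (fun y _ => (hC.1.1 (x, y) s hs).1) (mem_univ y)

theorem IsJointMeasurement.isMeasurement_add_sub (hA : IsMeasurement S A)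
    (hC₁ : IsJointMeasurement S A B C₁) (hC₂ : IsJointMeasurement S A B C₂) (y₀ : Y) :
    IsMeasurement S (A + fun x => C₁ (x, y₀) - C₂ (x, y₀)) := by
  refine isMeasurement_of_nonneg_of_sum_eq_one (fun x s hs => ?_) (fun s hs => ?_)
  · have h₁ := (hC₁.1.1 (x, y₀) s hs).1
    have h₂ := hC₂.apply_le_left x y₀ hs
    simp only [Pi.add_apply, AffineMap.coe_add, AffineMap.coe_sub, Pi.sub_apply]
    linarith
  · simp only [Pi.add_apply, AffineMap.coe_add, AffineMap.coe_sub, Pi.sub_apply,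
      sum_add_distrib, sum_sub_distrib, hA.2 s hs, hC₁.2.2 y₀ s hs, hC₂.2.2 y₀ s hs]
    ring

theorem IsJointMeasurement.eq_of_mem_extremePoints
    (hext : A ∈ Set.extremePoints ℝ {B : X → (V →ᵃ[ℝ] ℝ) | IsMeasurement S B})
    (hC₁ : IsJointMeasurement S A B C₁) (hC₂ : IsJointMeasurement S A B C₂) : C₁ = C₂ := by
  funext ⟨x, y⟩
  have hsub : A - (fun x => C₁ (x, y) - C₂ (x, y)) = A + fun x => C₂ (x, y) - C₁ (x, y) := by
    rw [sub_eq_add_neg]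
    congr 1
    funext x
    exact neg_sub _ _
  have hE := Set.eq_zero_of_add_mem_of_sub_mem_of_mem_extremePoints hext
    (hC₁.isMeasurement_add_sub hext.1 hC₂ y)
    (hsub ▸ hC₂.isMeasurement_add_sub hext.1 hC₁ y)
  exact sub_eq_zero.mp (congrFun hE x)

end Measurement

theorem extremal_measurement_unique_joint {V : Type} [NormedAddCommGroup V] [NormedSpace ℝ V]
    (S : Set V)
    {X : Type*} [Fintype X] (A : X → (V →ᵃ[ℝ] ℝ))
    (hext : A ∈ Set.extremePoints ℝ {B : X → (V →ᵃ[ℝ] ℝ) | IsMeasurement S B}) :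
    (∀ (Y : Type) [Fintype Y] (B : Y → (V →ᵃ[ℝ] ℝ)), IsMeasurement S B →
        ∀ C₁ C₂ : X × Y → (V →ᵃ[ℝ] ℝ), IsJointMeasurement S A B C₁ →
          IsJointMeasurement S A B C₂ → ∀ p, ∀ s ∈ S, C₁ p s = C₂ p s) ∧
      (∀ C₁ C₂ : X × X → (V →ᵃ[ℝ] ℝ), IsJointMeasurement S A A C₁ →
        IsJointMeasurement S A A C₂ → ∀ x, ∀ s ∈ S, C₁ (x, x) s = C₂ (x, x) s) :=
  ⟨fun _ _ _ _ _ _ hC₁ hC₂ p _ _ => by rw [hC₁.eq_of_mem_extremePoints hext hC₂],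
    fun _ _ hC₁ hC₂ x _ _ => by rw [hC₁.eq_of_mem_extremePoints hext hC₂]⟩
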